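/- Let b ≥ 2 and let q be a nonzero polynomial with q(0) ≠ 0 such that M^r(q) divides ℓ_r · lcm_{0 ≤ i < r} M^i(q) for some nonzero ℓ_r ∈ K[x]. Then deg q ≤ 3·deg(ℓ_r)/b^r. -/

import Mathlib

/-! Write `M p = p(X ^ b)`, `A = M^r q`, `T = lcm_{i<r} M^i q`, and split `A = g h` with
`g = gcd(A, T)`. As `A` divides both `ℓ A` and `ℓ T`, it divides `ℓ g`, so `h ∣ ℓ`.
Every `M (M^i q)` with `i < r` divides `T` or equals `A`, so `M g ∣ M T ∣ T h`. Hence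
`b^r deg q = deg g + deg h`, `deg h ≤ deg ℓ`, `b deg g ≤ deg T + deg h` and
`deg T ≤ (1 + b + ⋯ + b^(r-1)) deg q`; eliminating `deg g` leaves
`(b^(r+1) - (b^r - 1)/(b - 1)) deg q ≤ (b + 1) deg ℓ`, and `(b² - 1)/(b² - b - 1) ≤ 3` for `b ≥ 2`. -/

open Polynomial

noncomputable section

/-- The least common multiple of a list of polynomials over a field. -/
def polyLcm {K : Type*} [Field K] (l : List K[X]) : K[X] :=
  letI := Classical.decEq K[X]
  l.foldr EuclideanDomain.lcm 1

theorem EuclideanDomain.map_lcm_dvd_lcm_map {R S : Type*} [EuclideanDomain R] [EuclideanDomain S]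
    [DecidableEq R] [DecidableEq S] (f : R →+* S) (a b : R) :
    f (lcm a b) ∣ lcm (f a) (f b) := by
  by_cases hab : f a = 0 ∧ f b = 0
  · rw [hab.1, lcm_zero_left]
    exact dvd_zero _
  have hG : gcd (f a) (f b) ≠ 0 := by rwa [Ne, EuclideanDomain.gcd_eq_zero_iff]
  -- Bézout: `f (gcd a b)` is an `S`-combination of `f a` and `f b`.
  obtain ⟨k, hk⟩ : gcd (f a) (f b) ∣ f (gcd a b) := by
    rw [gcd_eq_gcd_ab a b, map_add, map_mul, map_mul]
    exact dvd_add ((gcd_dvd_left _ _).mul_right _) ((gcd_dvd_right _ _).mul_right _)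
  refine ⟨k, mul_left_cancel₀ hG ?_⟩
  calc gcd (f a) (f b) * lcm (f a) (f b) = f (gcd a b * lcm a b) := by
        rw [gcd_mul_lcm, gcd_mul_lcm, map_mul]
    _ = gcd (f a) (f b) * (f (lcm a b) * k) := by rw [map_mul, hk]; ring

section PolyLcm

variable {K : Type*} [Field K]

@[simp]
theorem polyLcm_nil : polyLcm ([] : List K[X]) = 1 := rfl

theorem polyLcm_cons [DecidableEq K[X]] (x : K[X]) (xs : List K[X]) :
    polyLcm (x :: xs) = EuclideanDomain.lcm x (polyLcm xs) := by
  simp only [polyLcm, List.foldr_cons]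
  -- `polyLcm` computes with `Classical.decEq`; `congr!` identifies it with the given instance.
  congr!

theorem dvd_polyLcm {l : List K[X]} {p : K[X]} (hp : p ∈ l) : p ∣ polyLcm l := by
  classical
  induction l with
  | nil => simp at hp
  | cons x xs ih =>
    rw [polyLcm_cons]
    rcases List.mem_cons.mp hp with rfl | hp
    · exact EuclideanDomain.dvd_lcm_left _ _
    · exact (ih hp).trans (EuclideanDomain.dvd_lcm_right _ _)

theorem polyLcm_dvd {l : List K[X]} {c : K[X]} (h : ∀ p ∈ l, p ∣ c) : polyLcm l ∣ c := by
  classical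
  induction l with
  | nil => exact one_dvd c
  | cons x xs ih =>
    rw [polyLcm_cons]
    exact EuclideanDomain.lcm_dvd (h x List.mem_cons_self) (ih fun p hp => h p (.tail _ hp))

theorem polyLcm_ne_zero {l : List K[X]} (h : ∀ p ∈ l, p ≠ 0) : polyLcm l ≠ 0 := by
  classical
  induction l with
  | nil => exact one_ne_zero
  | cons x xs ih =>
    rw [polyLcm_cons, Ne, EuclideanDomain.lcm_eq_zero_iff, not_or]
    exact ⟨h x List.mem_cons_self, ih fun p hp => h p (.tail _ hp)⟩

theorem natDegree_polyLcm_le (l : List K[X]) :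
    (polyLcm l).natDegree ≤ (l.map natDegree).sum := by
  by_cases h0 : ∀ p ∈ l, p ≠ 0
  · exact (natDegree_le_of_dvd (polyLcm_dvd fun p hp => List.dvd_prod hp)
      (List.prod_ne_zero fun h => h0 0 h rfl)).trans (natDegree_list_prod_le l)
  · push Not at h0
    obtain ⟨p, hp, rfl⟩ := h0
    rw [zero_dvd_iff.mp (dvd_polyLcm hp), natDegree_zero]
    exact Nat.zero_le _

theorem map_polyLcm_dvd {S : Type*} [EuclideanDomain S] (f : K[X] →+* S) {l : List K[X]} {c : S}
    (h : ∀ p ∈ l, f p ∣ c) : f (polyLcm l) ∣ c := by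
  classical
  induction l with
  | nil => simp
  | cons x xs ih =>
    rw [polyLcm_cons]
    exact (EuclideanDomain.map_lcm_dvd_lcm_map f x (polyLcm xs)).trans
      (EuclideanDomain.lcm_dvd (h x List.mem_cons_self) (ih fun p hp => h p (.tail _ hp)))

end PolyLcm

theorem dvd_of_eq_gcd_mul_of_dvd_mul {α : Type*} [CommMonoidWithZero α] [GCDMonoid α]
    {a t ℓ h : α} (hg : gcd a t ≠ 0) (ha : a = gcd a t * h) (hdiv : a ∣ ℓ * t) : h ∣ ℓ := by
  have hℓ : a ∣ gcd a t * ℓ :=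
    (dvd_gcd (dvd_mul_right a ℓ) (mul_comm ℓ t ▸ hdiv)).trans (gcd_mul_right' ℓ a t).dvd
  exact (mul_dvd_mul_iff_left hg).mp (ha.symm.dvd.trans hℓ)

theorem Nat.add_one_mul_pow_add_three_mul_geom_sum_le {b : ℕ} (hb : 2 ≤ b) (r : ℕ) :
    (b + 1) * b ^ r + 3 * ∑ i ∈ Finset.range r, b ^ i ≤ 3 * b ^ (r + 1) := by
  induction r with
  | zero => simp only [zero_add, pow_zero, pow_one, mul_one, Finset.range_zero, Finset.sum_empty]; omega
  | succ r ih =>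
    have hquad : 2 * (2 * b + 1) * b ^ r ≤ b * (2 * b + 1) * b ^ r := by gcongr
    rw [Finset.sum_range_succ, pow_succ b (r + 1)]
    rw [pow_succ] at ih ⊢
    nlinarith

theorem Nat.pow_mul_le_three_mul {b r d L : ℕ} (hb : 2 ≤ b)
    (h : b ^ (r + 1) * d ≤ (∑ i ∈ Finset.range r, b ^ i) * d + (b + 1) * L) :
    b ^ r * d ≤ 3 * L := by
  have hgeom := Nat.add_one_mul_pow_add_three_mul_geom_sum_le hb r
  have : (b + 1) * (b ^ r * d) ≤ (b + 1) * (3 * L) := by nlinarith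
  exact Nat.le_of_mul_le_mul_left this (by omega)

section Iterates

variable {K : Type*} [Field K]

theorem polyLcm_comp_X_pow_dvd (q c : K[X]) (b r : ℕ)
    (hT : polyLcm ((List.range r).map fun i => q.comp (X ^ b ^ i)) ∣ c)
    (hA : q.comp (X ^ b ^ r) ∣ c) :
    (polyLcm ((List.range r).map fun i => q.comp (X ^ b ^ i))).comp (X ^ b) ∣ c := by
  rw [← coe_compRingHom_apply]
  refine map_polyLcm_dvd _ ?_
  simp only [List.forall_mem_map, List.mem_range, coe_compRingHom_apply]
  intro i hi
  rw [comp_assoc, X_pow_comp, ← pow_mul, ← pow_succ']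
  rcases (Nat.succ_le_of_lt hi).lt_or_eq with hlt | rfl
  · exact (dvd_polyLcm (List.mem_map_of_mem (List.mem_range.mpr hlt))).trans hT
  · exact hA

theorem pow_succ_mul_natDegree_le {b r : ℕ} (hb : 0 < b) {ℓ q : K[X]} (hℓ : ℓ ≠ 0) (hq : q ≠ 0)
    (hdiv : q.comp (X ^ b ^ r) ∣ ℓ * polyLcm ((List.range r).map fun i => q.comp (X ^ b ^ i))) :
    b ^ (r + 1) * q.natDegree ≤
      (∑ i ∈ Finset.range r, b ^ i) * q.natDegree + (b + 1) * ℓ.natDegree := by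
  classical
  have hdeg (n : ℕ) : (q.comp (X ^ b ^ n)).natDegree = b ^ n * q.natDegree := by
    rw [natDegree_comp, natDegree_X_pow, mul_comm]
  have hne (n : ℕ) : q.comp (X ^ b ^ n) ≠ 0 := by
    rw [← expand_eq_comp_X_pow]
    exact (expand_ne_zero (pow_pos hb n)).mpr hq
  set T := polyLcm ((List.range r).map fun i => q.comp (X ^ b ^ i))
  set A := q.comp (X ^ b ^ r)
  have hA0 : A ≠ 0 := hne r
  have hT : T ≠ 0 := polyLcm_ne_zero (by simpa using fun i _ => hne i)
  set g := gcd A T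
  obtain ⟨h, hA⟩ : g ∣ A := gcd_dvd_left A T
  have hg : g ≠ 0 := by simp [g, hA0]
  have hh : h ≠ 0 := right_ne_zero_of_mul (hA ▸ hA0)
  have hhℓ : h ∣ ℓ := dvd_of_eq_gcd_mul_of_dvd_mul hg hA hdiv
  have hMg : g.comp (X ^ b) ∣ T * h :=
    (map_dvd (compRingHom (X ^ b)) (gcd_dvd_right A T)).trans <| polyLcm_comp_X_pow_dvd q _ b r
      (dvd_mul_right T h) (hA ▸ mul_dvd_mul_right (gcd_dvd_right A T) h : A ∣ T * h)
  have hdegA : b ^ r * q.natDegree = g.natDegree + h.natDegree := by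
    rw [← hdeg r, ← natDegree_mul hg hh, ← hA]
  have hdeg_h : h.natDegree ≤ ℓ.natDegree := natDegree_le_of_dvd hhℓ hℓ
  have hdegT : T.natDegree ≤ (∑ i ∈ Finset.range r, b ^ i) * q.natDegree := by
    refine (natDegree_polyLcm_le _).trans (le_of_eq ?_)
    rw [Finset.sum_mul, List.map_map]
    exact congrArg List.sum (List.map_congr_left fun i _ => hdeg i)
  have hdeg_Mg : g.natDegree * b ≤ T.natDegree + h.natDegree := by
    simpa [natDegree_comp, natDegree_mul hT hh] using natDegree_le_of_dvd hMg (mul_ne_zero hT hh)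
  calc b ^ (r + 1) * q.natDegree = g.natDegree * b + b * h.natDegree := by
        rw [pow_succ', mul_assoc, hdegA]; ring
    _ ≤ (∑ i ∈ Finset.range r, b ^ i) * q.natDegree + h.natDegree + b * h.natDegree := by
        gcongr; omega
    _ ≤ (∑ i ∈ Finset.range r, b ^ i) * q.natDegree + (b + 1) * ℓ.natDegree := by
        linarith [Nat.mul_le_mul_left b hdeg_h]

end Iterates

theorem stmt_16_general {K : Type*} [Field K] (b r : ℕ) (hb : 2 ≤ b)
    (ℓr : K[X]) (hlr : ℓr ≠ 0)
    (q : K[X]) (hq : q ≠ 0)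
    (hdiv : q.comp (X ^ b ^ r) ∣
      ℓr * polyLcm ((List.range r).map fun i => q.comp (X ^ b ^ i))) :
    (q.natDegree : ℚ) ≤ 3 * (ℓr.natDegree : ℚ) / (b : ℚ) ^ r := by
  have h := Nat.pow_mul_le_three_mul hb (pow_succ_mul_natDegree_le (by omega) hlr hq hdiv)
  rw [le_div_iff₀ (by positivity), mul_comm]
  exact_mod_cast h

theorem stmt_16 {K : Type*} [Field K] (b r : ℕ) (hb : 2 ≤ b) (hr : 1 ≤ r)
    (ℓr : K[X]) (hlr : ℓr ≠ 0)
    (q : K[X]) (hq : q ≠ 0) (hq0 : q.eval 0 ≠ 0)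
    (hdiv : q.comp (X ^ b ^ r) ∣
      ℓr * polyLcm ((List.range r).map fun i => q.comp (X ^ b ^ i))) :
    (q.natDegree : ℚ) ≤ 3 * (ℓr.natDegree : ℚ) / (b : ℚ) ^ r :=
  stmt_16_general b r hb ℓr hlr q hq hdiv
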